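/- arXiv:2006.15705 — 6 statements merged into one kernel-verified Lean document; each statement's English description precedes it below -/
import Mathlib

section
/- Let Γ be a countable group, Λ ≤ Γ a subgroup, and α : Γ → Γ/Λ the quotient map. For probability measures τ on Γ, define α_*τ(γΛ) = ∑_{λ∈Λ} τ(γλ). If τ₁ and τ₂ are Λ-absorbing (i.e. α_*τᵢ is invariant under the left Λ-action on Γ/Λ), then for every coset γΛ, α_*(τ₁ * τ₂)(γΛ) = ∑_{ηΛ ∈ Γ/Λ} α_*τ₁(ηΛ) · α_*τ₂(η⁻¹γΛ). In particular the convolution τ₁ * τ₂ is again Λ-absorbing. -/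
open scoped ENNReal

/-- The pushforward of a measure `τ` on `Γ` to the coset space `Γ ⧸ Λ`:
`α_*τ(γΛ) = ∑_{λ ∈ Λ} τ(γλ)`. -/
noncomputable def pushQuot {Γ : Type*} [Group Γ] (Λ : Subgroup Γ) (τ : Γ → ℝ≥0∞)
    (c : Γ ⧸ Λ) : ℝ≥0∞ :=
  ∑' l : Λ, τ (Quotient.out c * (l : Γ))

/-- `τ` is `Λ`-absorbing: the pushforward to `Γ ⧸ Λ` is invariant under the left
`Λ`-action `λ • (γΛ) = (λγ)Λ`. -/
def IsAbsorbing {Γ : Type*} [Group Γ] (Λ : Subgroup Γ) (τ : Γ → ℝ≥0∞) : Prop :=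
  ∀ (l : Λ) (c : Γ ⧸ Λ), pushQuot Λ τ ((l : Γ) • c) = pushQuot Λ τ c

/-- Convolution of two measures on a discrete group. -/
noncomputable def convMeas {Γ : Type*} [Group Γ] (τ₁ τ₂ : Γ → ℝ≥0∞) (g : Γ) : ℝ≥0∞ :=
  ∑' h : Γ, τ₁ h * τ₂ (h⁻¹ * g)

section
variable {Γ : Type*} [Group Γ] (Λ : Subgroup Γ)

lemma smul_mk' (g x : Γ) : (g • (x : Γ ⧸ Λ)) = ((g * x : Γ) : Γ ⧸ Λ) := rfl

lemma pushQuot_mk (τ : Γ → ℝ≥0∞) (γ : Γ) :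
    pushQuot Λ τ (γ : Γ ⧸ Λ) = ∑' l : Λ, τ (γ * l) := by
  have hk : γ⁻¹ * Quotient.out ((γ : Γ ⧸ Λ)) ∈ Λ := by
    rw [← QuotientGroup.eq]
    exact (QuotientGroup.out_eq' _).symm
  have key : ∀ l : Λ, Quotient.out ((γ : Γ ⧸ Λ)) * (l : Γ)
      = γ * (((⟨_, hk⟩ : Λ) * l : Λ) : Γ) := by
    intro l; simp [mul_assoc]
  calc pushQuot Λ τ (γ : Γ ⧸ Λ)
      = ∑' l : Λ, τ (γ * (((Equiv.mulLeft (⟨_, hk⟩ : Λ)) l : Λ) : Γ)) := by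
        refine tsum_congr fun l => ?_
        rw [key l]; rfl
    _ = ∑' l : Λ, τ (γ * l) :=
        (Equiv.mulLeft (⟨_, hk⟩ : Λ)).tsum_eq fun l : Λ => τ (γ * (l : Γ))

lemma absorb_mul {τ : Γ → ℝ≥0∞} (h : IsAbsorbing Λ τ) {k : Γ} (hk : k ∈ Λ) (x : Γ) :
    pushQuot Λ τ ((k * x : Γ) : Γ ⧸ Λ) = pushQuot Λ τ (x : Γ ⧸ Λ) := by
  rw [← smul_mk']
  exact h ⟨k, hk⟩ _

/-- The equivalence `(Γ ⧸ Λ) × Λ ≃ Γ`. -/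
noncomputable def cosetEquiv : (Γ ⧸ Λ) × Λ ≃ Γ where
  toFun p := Quotient.out p.1 * p.2
  invFun g := ⟨(g : Γ ⧸ Λ), ⟨(Quotient.out ((g : Γ ⧸ Λ)))⁻¹ * g, by
    rw [← QuotientGroup.eq]; exact QuotientGroup.out_eq' _⟩⟩
  left_inv := by
    rintro ⟨c, l⟩
    have h1 : ((Quotient.out c * (l : Γ) : Γ) : Γ ⧸ Λ) = c := by
      rw [QuotientGroup.mk_mul_of_mem _ l.2, QuotientGroup.out_eq']
    ext
    · exact h1
    · simp [h1]
  right_inv := fun g => by simp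

lemma tsum_coset_decomp (f : Γ → ℝ≥0∞) :
    ∑' g : Γ, f g = ∑' c : Γ ⧸ Λ, ∑' l : Λ, f (Quotient.out c * l) := by
  rw [← (cosetEquiv Λ).tsum_eq f]
  exact ENNReal.tsum_prod (f := fun c (l : Λ) => f (Quotient.out c * l))

lemma tsum_smul_quot (l : Γ) (F : Γ ⧸ Λ → ℝ≥0∞) :
    ∑' c : Γ ⧸ Λ, F (l • c) = ∑' c : Γ ⧸ Λ, F c :=
  Equiv.tsum_eq (⟨fun c => l • c, fun c => l⁻¹ • c,
    fun c => inv_smul_smul l c, fun c => smul_inv_smul l c⟩ : (Γ ⧸ Λ) ≃ (Γ ⧸ Λ)) F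

end

theorem stmt0 {Γ : Type*} [Group Γ] [Countable Γ] (Λ : Subgroup Γ)
    (τ₁ τ₂ : Γ → ℝ≥0∞) (hτ₁ : ∑' g, τ₁ g = 1) (hτ₂ : ∑' g, τ₂ g = 1)
    (h₁ : IsAbsorbing Λ τ₁) (h₂ : IsAbsorbing Λ τ₂) :
    (∀ γ : Γ, pushQuot Λ (convMeas τ₁ τ₂) (γ : Γ ⧸ Λ) =
      ∑' c : Γ ⧸ Λ, pushQuot Λ τ₁ c *
        pushQuot Λ τ₂ (((Quotient.out c)⁻¹ * γ : Γ) : Γ ⧸ Λ)) ∧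
    IsAbsorbing Λ (convMeas τ₁ τ₂) := by
  have key : ∀ γ : Γ, pushQuot Λ (convMeas τ₁ τ₂) (γ : Γ ⧸ Λ) =
      ∑' c : Γ ⧸ Λ, pushQuot Λ τ₁ c *
        pushQuot Λ τ₂ (((Quotient.out c)⁻¹ * γ : Γ) : Γ ⧸ Λ) := by
    intro γ
    calc pushQuot Λ (convMeas τ₁ τ₂) (γ : Γ ⧸ Λ)
        = ∑' l : Λ, ∑' h : Γ, τ₁ h * τ₂ (h⁻¹ * (γ * l)) := by
          rw [pushQuot_mk]; rfl
      _ = ∑' h : Γ, τ₁ h * pushQuot Λ τ₂ ((h⁻¹ * γ : Γ) : Γ ⧸ Λ) := by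
          rw [ENNReal.tsum_comm]
          refine tsum_congr fun h => ?_
          rw [pushQuot_mk, ENNReal.tsum_mul_left]
          congr 1
          refine tsum_congr fun l => ?_
          rw [mul_assoc]
      _ = ∑' c : Γ ⧸ Λ, ∑' l : Λ,
            τ₁ (Quotient.out c * l) *
              pushQuot Λ τ₂ (((Quotient.out c * (l : Γ))⁻¹ * γ : Γ) : Γ ⧸ Λ) :=
          tsum_coset_decomp Λ _
      _ = ∑' c : Γ ⧸ Λ, pushQuot Λ τ₁ c *
            pushQuot Λ τ₂ (((Quotient.out c)⁻¹ * γ : Γ) : Γ ⧸ Λ) := by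
          refine tsum_congr fun c => ?_
          rw [pushQuot, ← ENNReal.tsum_mul_right]
          refine tsum_congr fun l => ?_
          congr 1
          rw [mul_inv_rev, mul_assoc]
          exact absorb_mul Λ h₂ (inv_mem l.2) _
  refine ⟨key, ?_⟩
  intro l c
  obtain ⟨γ₀, rfl⟩ : ∃ γ₀ : Γ, (γ₀ : Γ ⧸ Λ) = c := ⟨Quotient.out c, QuotientGroup.out_eq' c⟩
  rw [smul_mk', key, key,
    ← tsum_smul_quot Λ (l : Γ) (fun c => pushQuot Λ τ₁ c *
        pushQuot Λ τ₂ (((Quotient.out c)⁻¹ * ((l : Γ) * γ₀) : Γ) : Γ ⧸ Λ))]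
  refine tsum_congr fun c' => ?_
  rw [h₁ l c']
  congr 1
  have hmem : ((l : Γ) * Quotient.out c')⁻¹ * Quotient.out ((l : Γ) • c') ∈ Λ := by
    rw [← QuotientGroup.eq, ← smul_mk', QuotientGroup.out_eq', QuotientGroup.out_eq']
  set k := ((l : Γ) * Quotient.out c')⁻¹ * Quotient.out ((l : Γ) • c') with hkdef
  have hout : Quotient.out ((l : Γ) • c') = (l : Γ) * Quotient.out c' * k := by
    rw [hkdef]; group
  have harg : (Quotient.out ((l : Γ) • c'))⁻¹ * ((l : Γ) * γ₀)
      = k⁻¹ * ((Quotient.out c')⁻¹ * γ₀) := by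
    rw [hout]; group
  rw [harg]
  exact absorb_mul Λ h₂ (inv_mem hmem) _
end

section
/- Let Γ be a countable group and Λ ≤ Γ a subgroup such that (Γ,Λ) is a Hecke pair, i.e. every Λ-orbit in Γ/Λ is finite (equivalently, Λ ∩ γΛγ⁻¹ has finite index in Λ for all γ ∈ Γ). Then for every finite subset S ⊆ Γ there exist a finite subset S̃ ⊆ Γ with S ⊆ S̃ and an affine map from probability measures supported in S to Λ-absorbing probability measures supported in S̃, sending each τ to a measure τ̃ with supp(τ) ⊆ supp(τ̃). -/
/-!
The Hecke condition says that the `Λ`-orbit of each coset `sΛ` in `Γ ⧸ Λ` is finite, so the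
uniform measure on it is `Λ`-invariant. Lifting it to `Γ` along a section of `Γ → Γ ⧸ Λ`
through `s` gives a `Λ`-absorbing probability measure `μₛ` of finite support with `μₛ(s) ≠ 0`,
and `τ ↦ ∑_{s ∈ S} τ(s) μₛ` is the required affine map.
-/

open scoped ENNReal

open MulAction

section OrbitUniform

variable {G α : Type*} [Group G] [MulAction G α] {x : α}

noncomputable def orbitUniform (h : (orbit G x).Finite) : PMF α :=
  PMF.uniformOfFinset h.toFinset (h.toFinset_nonempty.mpr (nonempty_orbit x))

theorem orbitUniform_ne_zero_iff (h : (orbit G x).Finite) (a : α) :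
    orbitUniform h a ≠ 0 ↔ a ∈ orbit G x := by
  rw [← PMF.mem_support_iff, orbitUniform, PMF.mem_support_uniformOfFinset_iff,
    Set.Finite.mem_toFinset]

theorem orbitUniform_smul (h : (orbit G x).Finite) (g : G) (a : α) :
    orbitUniform h (g • a) = orbitUniform h a := by
  classical
  have hmem : g • a ∈ h.toFinset ↔ a ∈ h.toFinset := by
    rw [Set.Finite.mem_toFinset, Set.Finite.mem_toFinset, ← orbit_eq_iff, orbit_smul,
      orbit_eq_iff]
  simp only [orbitUniform, PMF.uniformOfFinset_apply]
  exact if_congr hmem rfl rfl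

end OrbitUniform

section LiftBySection

variable {Γ : Type*} [Group Γ] {Λ : Subgroup Γ} {r : Γ ⧸ Λ → Γ}

/-- The measure on `Γ` carried by the image of `r` whose value at `r c` is `φ c`. -/
noncomputable def liftBySection (r : Γ ⧸ Λ → Γ) (φ : Γ ⧸ Λ → ℝ≥0∞) (g : Γ) : ℝ≥0∞ :=
  open Classical in if r g = g then φ g else 0

theorem liftBySection_ne_zero {φ : Γ ⧸ Λ → ℝ≥0∞} {g : Γ} (h : liftBySection r φ g ≠ 0) :
    r g = g ∧ φ g ≠ 0 := by
  simpa [liftBySection] using h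

variable (hr : ∀ c, (r c : Γ ⧸ Λ) = c) (φ : Γ ⧸ Λ → ℝ≥0∞)
include hr

theorem liftBySection_apply_section (c : Γ ⧸ Λ) : liftBySection r φ (r c) = φ c := by
  simp [liftBySection, hr]

theorem pushQuot_liftBySection (c : Γ ⧸ Λ) : pushQuot Λ (liftBySection r φ) c = φ c := by
  have hout : ((Quotient.out c : Γ) : Γ ⧸ Λ) = c := QuotientGroup.out_eq' c
  have hl₀ : (Quotient.out c)⁻¹ * r c ∈ Λ := QuotientGroup.eq.mp (hout.trans (hr c).symm)
  have hcoset : ∀ l : Λ, ((Quotient.out c * l : Γ) : Γ ⧸ Λ) = c := fun l => by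
    rw [QuotientGroup.mk_mul_of_mem _ l.2, hout]
  rw [pushQuot, tsum_eq_single ⟨_, hl₀⟩]
  · simpa using liftBySection_apply_section hr φ c
  · intro l hl
    have hne : r c ≠ Quotient.out c * l := fun h =>
      hl (Subtype.ext (eq_inv_mul_of_mul_eq h.symm))
    simp [liftBySection, hcoset, hne]

theorem tsum_liftBySection : ∑' g, liftBySection r φ g = ∑' c, φ c := by
  have hsupp : Function.support (liftBySection r φ) ⊆ Set.range r := fun g hg =>
    ⟨_, (liftBySection_ne_zero hg).1⟩
  rw [← (Function.LeftInverse.injective hr).tsum_eq hsupp]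
  exact tsum_congr (liftBySection_apply_section hr φ)

end LiftBySection

section HeckeMeasure

variable {Γ : Type*} [Group Γ] {Λ : Subgroup Γ}

noncomputable def sectionThrough (Λ : Subgroup Γ) (s : Γ) (c : Γ ⧸ Λ) : Γ :=
  open Classical in if c = s then s else c.out

theorem mk_sectionThrough (s : Γ) (c : Γ ⧸ Λ) : ((sectionThrough Λ s c : Γ) : Γ ⧸ Λ) = c := by
  unfold sectionThrough
  split_ifs with h
  · exact h.symm
  · exact QuotientGroup.out_eq' c

theorem sectionThrough_self (s : Γ) : sectionThrough Λ s s = s := by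
  simp [sectionThrough]

variable {s : Γ} (h : (orbit Λ (s : Γ ⧸ Λ)).Finite)

noncomputable def heckeMeasure : Γ → ℝ≥0∞ :=
  liftBySection (sectionThrough Λ s) (orbitUniform h)

noncomputable def heckeSupport : Finset Γ :=
  open Classical in h.toFinset.image (sectionThrough Λ s)

theorem tsum_heckeMeasure : ∑' g, heckeMeasure h g = 1 :=
  (tsum_liftBySection (mk_sectionThrough s) _).trans (PMF.tsum_coe _)

theorem isAbsorbing_heckeMeasure : IsAbsorbing Λ (heckeMeasure h) := fun l c => by
  rw [heckeMeasure, pushQuot_liftBySection (mk_sectionThrough s),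
    pushQuot_liftBySection (mk_sectionThrough s)]
  exact orbitUniform_smul h l c

theorem heckeMeasure_self_ne_zero : heckeMeasure h s ≠ 0 := by
  have h_apply := liftBySection_apply_section (mk_sectionThrough s) (orbitUniform h) (s : Γ ⧸ Λ)
  rw [sectionThrough_self] at h_apply
  rw [heckeMeasure, h_apply, orbitUniform_ne_zero_iff]
  exact mem_orbit_self _

theorem self_mem_heckeSupport : s ∈ heckeSupport h := by
  classical
  rw [heckeSupport, Finset.mem_image]
  exact ⟨s, (Set.Finite.mem_toFinset h).mpr (mem_orbit_self _), sectionThrough_self s⟩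

theorem heckeMeasure_eq_zero_of_notMem {g : Γ} (hg : g ∉ heckeSupport h) :
    heckeMeasure h g = 0 := by
  classical
  by_contra hne
  obtain ⟨hsec, horb⟩ := liftBySection_ne_zero hne
  refine hg (Finset.mem_image.mpr ⟨g, ?_, hsec⟩)
  exact (Set.Finite.mem_toFinset h).mpr ((orbitUniform_ne_zero_iff h _).mp horb)

end HeckeMeasure

section Mixture

variable {Γ ι : Type*} [Group Γ] {Λ : Subgroup Γ}

theorem pushQuot_sum_mul (I : Finset ι) (a : ι → ℝ≥0∞) (μ : ι → Γ → ℝ≥0∞) (c : Γ ⧸ Λ) :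
    pushQuot Λ (fun g => ∑ i ∈ I, a i * μ i g) c = ∑ i ∈ I, a i * pushQuot Λ (μ i) c := by
  simp only [pushQuot]
  rw [Summable.tsum_finsetSum fun _ _ => ENNReal.summable]
  simp only [ENNReal.tsum_mul_left]

theorem IsAbsorbing.sum_mul {I : Finset ι} (a : ι → ℝ≥0∞) {μ : ι → Γ → ℝ≥0∞}
    (hμ : ∀ i ∈ I, IsAbsorbing Λ (μ i)) : IsAbsorbing Λ (fun g => ∑ i ∈ I, a i * μ i g) :=
  fun l c => by
    simp only [pushQuot_sum_mul]
    exact Finset.sum_congr rfl fun i hi => by rw [hμ i hi l c]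

end Mixture

theorem stmt3_general {Γ : Type*} [Group Γ] (Λ : Subgroup Γ)
    (hHecke : ∀ γ : Γ,
      Set.Finite {c : Γ ⧸ Λ | ∃ l : Λ, c = (l : Γ) • ((γ : Γ ⧸ Λ))})
    (S : Finset Γ) :
    ∃ (S' : Finset Γ) (T : (Γ → ℝ≥0∞) → (Γ → ℝ≥0∞)),
      (S : Set Γ) ⊆ (S' : Set Γ) ∧
      -- `T` is affine on probability measures supported in `S`
      (∀ (a b : ℝ≥0∞) (τ σ : Γ → ℝ≥0∞), a + b = 1 →
        (∑' g, τ g = 1) → (∀ g ∉ S, τ g = 0) →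
        (∑' g, σ g = 1) → (∀ g ∉ S, σ g = 0) →
        T (fun g => a * τ g + b * σ g) = fun g => a * T τ g + b * T σ g) ∧
      -- `T` sends probability measures supported in `S` to `Λ`-absorbing
      -- probability measures supported in `S'`, enlarging supports
      (∀ τ : Γ → ℝ≥0∞, (∑' g, τ g = 1) → (∀ g ∉ S, τ g = 0) →
        (∑' g, T τ g = 1) ∧ IsAbsorbing Λ (T τ) ∧
        (∀ g ∉ S', T τ g = 0) ∧ (∀ g, τ g ≠ 0 → T τ g ≠ 0)) := by
  classical
  have hfin : ∀ s : Γ, (orbit Λ (s : Γ ⧸ Λ)).Finite := fun s =>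
    (hHecke s).subset fun _ ⟨l, hl⟩ => ⟨l, hl.symm⟩
  refine ⟨S.biUnion fun s => heckeSupport (hfin s),
    fun τ g => ∑ s ∈ S, τ s * heckeMeasure (hfin s) g,
    fun s hs => Finset.mem_biUnion.mpr ⟨s, hs, self_mem_heckeSupport _⟩, ?_, ?_⟩
  · intro a b τ σ _ _ _ _ _
    funext g
    simp only [add_mul, mul_assoc, Finset.sum_add_distrib, Finset.mul_sum]
  intro τ hτ hτS
  refine ⟨?_, IsAbsorbing.sum_mul τ fun s _ => isAbsorbing_heckeMeasure (hfin s), ?_, ?_⟩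
  · calc ∑' g, ∑ s ∈ S, τ s * heckeMeasure (hfin s) g
        = ∑ s ∈ S, τ s * ∑' g, heckeMeasure (hfin s) g := by
          rw [Summable.tsum_finsetSum fun _ _ => ENNReal.summable]
          simp only [ENNReal.tsum_mul_left]
      _ = ∑' g, τ g := by simp only [tsum_heckeMeasure, mul_one, tsum_eq_sum hτS]
      _ = 1 := hτ
  · refine fun g hg => Finset.sum_eq_zero fun s hs => ?_
    rw [heckeMeasure_eq_zero_of_notMem _ fun h => hg (Finset.mem_biUnion.mpr ⟨s, hs, h⟩),
      mul_zero]
  · intro g hg h0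
    have hgS : g ∈ S := by
      by_contra h
      exact hg (hτS g h)
    exact mul_ne_zero hg (heckeMeasure_self_ne_zero _) (Finset.sum_eq_zero_iff.mp h0 g hgS)

theorem stmt3 {Γ : Type*} [Group Γ] [Countable Γ] (Λ : Subgroup Γ)
    (hHecke : ∀ γ : Γ,
      Set.Finite {c : Γ ⧸ Λ | ∃ l : Λ, c = (l : Γ) • ((γ : Γ ⧸ Λ))})
    (S : Finset Γ) :
    ∃ (S' : Finset Γ) (T : (Γ → ℝ≥0∞) → (Γ → ℝ≥0∞)),
      (S : Set Γ) ⊆ (S' : Set Γ) ∧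
      -- `T` is affine on probability measures supported in `S`
      (∀ (a b : ℝ≥0∞) (τ σ : Γ → ℝ≥0∞), a + b = 1 →
        (∑' g, τ g = 1) → (∀ g ∉ S, τ g = 0) →
        (∑' g, σ g = 1) → (∀ g ∉ S, σ g = 0) →
        T (fun g => a * τ g + b * σ g) = fun g => a * T τ g + b * T σ g) ∧
      -- `T` sends probability measures supported in `S` to `Λ`-absorbing
      -- probability measures supported in `S'`, enlarging supports
      (∀ τ : Γ → ℝ≥0∞, (∑' g, τ g = 1) → (∀ g ∉ S, τ g = 0) →
        (∑' g, T τ g = 1) ∧ IsAbsorbing Λ (T τ) ∧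
        (∀ g ∉ S', T τ g = 0) ∧ (∀ g, τ g ≠ 0 → T τ g ≠ 0)) :=
  stmt3_general Λ hHecke S
end

section
/- Let Γ be a countable group, Λ ≤ Γ a subgroup, and suppose for every γ ∈ Γ all elements of Λ commute with all elements of γΛγ⁻¹. Assume (Γ,Λ) is a Hecke pair, and for each coset γΛ choose a set of representatives A_{γΛ} for Λ/(Λ ∩ γΛγ⁻¹) with γ ↦ A_{γΛ} left-Λ-invariant. Then for any probability measure τ on Γ, the measure τ̃(γ) = (1/|A_{γΛ}|) ∑_{a ∈ A_{γΛ}} τ(aγ) is a Λ-absorbing probability measure on Γ, and τ ↦ τ̃ is affine. -/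
open scoped ENNReal

/-- The averaged measure `τ̃(γ) = |A_{γΛ}|⁻¹ ∑_{a ∈ A_{γΛ}} τ(aγ)`. -/
noncomputable def avgMeas {Γ : Type*} [Group Γ] [DecidableEq Γ] (A : Γ → Finset Γ)
    (τ : Γ → ℝ≥0∞) (γ : Γ) : ℝ≥0∞ :=
  ((A γ).card : ℝ≥0∞)⁻¹ * ∑ a ∈ A γ, τ (a * γ)

/-- `pushQuot` evaluated via any representative of the coset. -/
lemma pushQuot_eq_rep {Γ : Type*} [Group Γ] (Λ : Subgroup Γ) (τ : Γ → ℝ≥0∞)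
    (γ : Γ) (c : Γ ⧸ Λ) (hc : (γ : Γ ⧸ Λ) = c) :
    pushQuot Λ τ c = ∑' l : Λ, τ (γ * (l : Γ)) := by
  have h : (γ : Γ ⧸ Λ) = ((Quotient.out c : Γ) : Γ ⧸ Λ) := by
    rw [hc, QuotientGroup.out_eq']
  have hmem : γ⁻¹ * Quotient.out c ∈ Λ := QuotientGroup.eq.mp h
  set lam0 : Λ := ⟨γ⁻¹ * Quotient.out c, hmem⟩
  have hout : Quotient.out c = γ * (lam0 : Γ) := by simp [lam0]
  unfold pushQuot
  rw [hout]
  calc ∑' l : Λ, τ (γ * (lam0 : Γ) * (l : Γ))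
      = ∑' l : Λ, (fun x : Λ => τ (γ * (x : Γ))) (Equiv.mulLeft lam0 l) := by
        refine tsum_congr fun l => ?_
        simp [mul_assoc]
    _ = ∑' l : Λ, τ (γ * (l : Γ)) :=
        Equiv.tsum_eq (Equiv.mulLeft lam0) (fun x : Λ => τ (γ * (x : Γ)))

/-- The shear equivalence `(g, a) ↦ (a * g, a)`. -/
def shearEquiv {Γ : Type*} [Group Γ] : Γ × Γ ≃ Γ × Γ :=
  ⟨fun p => (p.2 * p.1, p.2), fun p => (p.2⁻¹ * p.1, p.2),
    fun p => by simp, fun p => by simp⟩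

/-- Shear reindexing for sums over `g` of sums over `A g`. -/
lemma tsum_shear {Γ : Type*} [Group Γ] [DecidableEq Γ] (A : Γ → Finset Γ)
    (F : Γ → Γ → ℝ≥0∞) (hA : ∀ a g : Γ, a ∈ A g ↔ a ∈ A (a * g)) :
    ∑' g, ∑ a ∈ A g, F a (a * g) = ∑' g, ∑ a ∈ A g, F a g := by
  classical
  set G : Γ × Γ → ℝ≥0∞ := fun p => if p.2 ∈ A p.1 then F p.2 p.1 else 0 with hG
  have inner : ∀ (H : Γ → Γ → ℝ≥0∞) (g : Γ),
      ∑' a : Γ, (if a ∈ A g then H a g else 0) = ∑ a ∈ A g, H a g := by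
    intro H g
    rw [tsum_eq_sum (s := A g) (fun b hb => if_neg hb)]
    exact Finset.sum_congr rfl fun b hb => if_pos hb
  have h1 : ∑' p : Γ × Γ, G (shearEquiv p) = ∑' p : Γ × Γ, G p :=
    Equiv.tsum_eq shearEquiv G
  have h2 : ∑' p : Γ × Γ, G p = ∑' g, ∑ a ∈ A g, F a g := by
    rw [ENNReal.tsum_prod']
    exact tsum_congr fun g => inner F g
  have h3 : ∑' p : Γ × Γ, G (shearEquiv p) = ∑' g, ∑ a ∈ A g, F a (a * g) := by
    rw [ENNReal.tsum_prod']
    refine tsum_congr fun g => ?_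
    have : ∀ a : Γ, G (shearEquiv (g, a)) = if a ∈ A g then F a (a * g) else 0 := by
      intro a
      show (if a ∈ A (a * g) then F a (a * g) else 0) = _
      by_cases h : a ∈ A g
      · rw [if_pos ((hA a g).mp h), if_pos h]
      · rw [if_neg (fun hh => h ((hA a g).mpr hh)), if_neg h]
    rw [tsum_congr this, inner (fun a g => F a (a * g)) g]
  rw [← h3, h1, h2]

theorem stmt4 {Γ : Type*} [Group Γ] [Countable Γ] [DecidableEq Γ] (Λ : Subgroup Γ)
    -- all elements of `Λ` commute with all elements of `γΛγ⁻¹`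
    (hcomm : ∀ (γ a b : Γ), a ∈ Λ → b ∈ Λ → Commute a (γ * b * γ⁻¹))
    -- a choice of finite (Hecke pair!) sets of representatives for `Λ/(Λ ∩ γΛγ⁻¹)`
    (A : Γ → Finset Γ)
    (hAne : ∀ γ, (A γ).Nonempty)
    (hAsub : ∀ γ, ∀ a ∈ A γ, a ∈ Λ)
    (hArep : ∀ (γ l : Γ), l ∈ Λ →
      ∃! a, a ∈ A γ ∧ a⁻¹ * l ∈ Λ ∧ ∃ b ∈ Λ, a⁻¹ * l = γ * b * γ⁻¹)
    -- left `Λ`-invariance of the choice `γ ↦ A_{γΛ}`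
    (hAinv : ∀ (l : Λ) (γ : Γ), A ((l : Γ) * γ) = A γ)
    (hAcoset : ∀ (γ : Γ) (l : Λ), A (γ * (l : Γ)) = A γ) :
    (∀ τ : Γ → ℝ≥0∞, (∑' g, τ g = 1) →
      (∑' g, avgMeas A τ g = 1) ∧ IsAbsorbing Λ (avgMeas A τ)) ∧
    (∀ (a b : ℝ≥0∞) (τ σ : Γ → ℝ≥0∞), a + b = 1 →
      avgMeas A (fun g => a * τ g + b * σ g)
        = fun g => a * avgMeas A τ g + b * avgMeas A σ g) := by
  classical
  have hAmem : ∀ a g : Γ, a ∈ A g ↔ a ∈ A (a * g) := by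
    intro a g
    constructor
    · intro h
      have ha : a ∈ Λ := hAsub g a h
      rw [hAinv ⟨a, ha⟩ g]; exact h
    · intro h
      have ha : a ∈ Λ := hAsub (a * g) a h
      rwa [hAinv ⟨a, ha⟩ g] at h
  have hcard : ∀ g : Γ, ((A g).card : ℝ≥0∞) ≠ 0 := by
    intro g
    simpa [Finset.card_eq_zero] using (hAne g).ne_empty
  constructor
  · intro τ hτ
    constructor
    · -- total mass
      have step1 : ∑' g, avgMeas A τ g
          = ∑' g, ∑ a ∈ A g, (((A (a * g)).card : ℝ≥0∞)⁻¹ * τ (a * g)) := by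
        refine tsum_congr fun g => ?_
        rw [avgMeas, Finset.mul_sum]
        refine Finset.sum_congr rfl fun a ha => ?_
        have : A (a * g) = A g := by
          rw [hAinv ⟨a, hAsub g a ha⟩ g]
        rw [this]
      rw [step1,
        tsum_shear A (fun a g => ((A g).card : ℝ≥0∞)⁻¹ * τ g) hAmem]
      have : ∀ g : Γ, ∑ a ∈ A g, (((A g).card : ℝ≥0∞)⁻¹ * τ g) = τ g := by
        intro g
        rw [Finset.sum_const, nsmul_eq_mul, ← mul_assoc,
          ENNReal.mul_inv_cancel (hcard g) (ENNReal.natCast_ne_top _), one_mul]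
      rw [tsum_congr this, hτ]
    · -- absorbing
      intro l c
      set γ : Γ := Quotient.out c with hγ
      have hlc : ((l : Γ) * γ : Γ ⧸ Λ) = (l : Γ) • c := by
        rw [← smul_eq_mul]
        exact MulAction.Quotient.mk_smul_out Λ (l : Γ) c
      rw [pushQuot_eq_rep Λ _ ((l : Γ) * γ) _ hlc,
        pushQuot_eq_rep Λ _ γ c (by rw [hγ, QuotientGroup.out_eq'])]
      -- rewrite both sides using A-invariance
      have hAeq : ∀ m : Γ, m ∈ Λ → ∀ lam : Λ, A (m * γ * (lam : Γ)) = A γ := by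
        intro m hm lam
        rw [mul_assoc, hAinv ⟨m, hm⟩ (γ * lam), hAcoset γ lam]
      set n : ℝ≥0∞ := ((A γ).card : ℝ≥0∞)⁻¹ with hn
      set f : Γ → ℝ≥0∞ := fun m => ∑' lam : Λ, τ (m * γ * (lam : Γ)) with hf
      have havg : ∀ m : Γ, m ∈ Λ →
          ∑' lam : Λ, avgMeas A τ (m * γ * (lam : Γ)) = n * ∑ a ∈ A γ, f (a * m) := by
        intro m hm
        have : ∀ lam : Λ, avgMeas A τ (m * γ * (lam : Γ))
            = n * ∑ a ∈ A γ, τ (a * m * γ * (lam : Γ)) := by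
          intro lam
          rw [avgMeas, hAeq m hm lam]
          congr 1
          refine Finset.sum_congr rfl fun a _ => ?_
          congr 1
          group
        rw [tsum_congr this, ENNReal.tsum_mul_left]
        congr 1
        rw [Summable.tsum_finsetSum fun i _ => ENNReal.summable]
      have h1 : ∑' lam : Λ, avgMeas A τ ((l : Γ) * γ * (lam : Γ))
          = n * ∑ a ∈ A γ, f (a * (l : Γ)) := havg (l : Γ) l.2
      have h2 : ∑' lam : Λ, avgMeas A τ (γ * (lam : Γ)) = n * ∑ a ∈ A γ, f a := by
        have := havg 1 (one_mem Λ)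
        simpa using this
      rw [h1, h2]
      congr 1
      -- key bijection argument
      -- f is invariant under right multiplication by γ b γ⁻¹, b ∈ Λ
      have finv : ∀ (m b : Γ), b ∈ Λ → f (m * (γ * b * γ⁻¹)) = f m := by
        intro m b hb
        have : ∀ lam : Λ, τ (m * (γ * b * γ⁻¹) * γ * (lam : Γ))
            = τ (m * γ * (((⟨b, hb⟩ : Λ) * lam : Λ) : Γ)) := by
          intro lam
          congr 1
          push_cast
          group
        calc f (m * (γ * b * γ⁻¹))
            = ∑' lam : Λ, (fun x : Λ => τ (m * γ * (x : Γ)))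
                (Equiv.mulLeft (⟨b, hb⟩ : Λ) lam) := tsum_congr this
          _ = f m := Equiv.tsum_eq (Equiv.mulLeft (⟨b, hb⟩ : Λ))
              (fun x : Λ => τ (m * γ * (x : Γ)))
      -- the permutation ψ of A γ induced by right multiplication by l
      set ψ : Γ → Γ := fun a =>
        if h : a * (l : Γ) ∈ Λ then (hArep γ (a * (l : Γ)) h).exists.choose else 1
        with hψdef
      have hψspec : ∀ a ∈ A γ, ψ a ∈ A γ ∧ (ψ a)⁻¹ * (a * (l : Γ)) ∈ Λ ∧
          ∃ b ∈ Λ, (ψ a)⁻¹ * (a * (l : Γ)) = γ * b * γ⁻¹ := by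
        intro a ha
        have h : a * (l : Γ) ∈ Λ := mul_mem (hAsub γ a ha) l.2
        rw [hψdef]
        simp only [dif_pos h]
        exact (hArep γ (a * (l : Γ)) h).exists.choose_spec
      have hval : ∀ a ∈ A γ, f (a * (l : Γ)) = f (ψ a) := by
        intro a ha
        obtain ⟨hψm, hψΛ, b, hb, hbe⟩ := hψspec a ha
        have : a * (l : Γ) = ψ a * (γ * b * γ⁻¹) := by
          rw [← hbe]; group
        rw [this, finv (ψ a) b hb]
      have hinj : Set.InjOn ψ (A γ) := by
        intro a₁ ha₁ a₂ ha₂ heq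
        obtain ⟨h₁m, h₁Λ, b₁, hb₁, he₁⟩ := hψspec a₁ ha₁
        obtain ⟨h₂m, h₂Λ, b₂, hb₂, he₂⟩ := hψspec a₂ ha₂
        rw [heq] at he₁ h₁Λ
        -- a₁ * l = ψ a₂ * (γ b₁ γ⁻¹),  a₂ * l = ψ a₂ * (γ b₂ γ⁻¹)
        have e₁ : a₁ * (l : Γ) = ψ a₂ * (γ * b₁ * γ⁻¹) := by rw [← he₁]; group
        have e₂ : a₂ * (l : Γ) = ψ a₂ * (γ * b₂ * γ⁻¹) := by rw [← he₂]; group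
        have key : a₂⁻¹ * a₁ = γ * (b₂⁻¹ * b₁) * γ⁻¹ := by
          have hmid : (a₂ * (l : Γ))⁻¹ * (a₁ * (l : Γ)) = γ * (b₂⁻¹ * b₁) * γ⁻¹ := by
            rw [e₁, e₂]; group
          have h3 : a₂⁻¹ * a₁
              = (l : Γ) * ((a₂ * (l : Γ))⁻¹ * (a₁ * (l : Γ))) * (l : Γ)⁻¹ := by
            group
          have hc := (hcomm γ (l : Γ) (b₂⁻¹ * b₁) l.2
            (mul_mem (inv_mem hb₂) hb₁)).eq
          rw [h3, hmid, hc]; group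
        -- uniqueness from hArep γ a₁
        have huniq := hArep γ a₁ (hAsub γ a₁ ha₁)
        obtain ⟨a₀, _, ha₀u⟩ := huniq
        have p₁ : a₁ ∈ A γ ∧ a₁⁻¹ * a₁ ∈ Λ ∧ ∃ b ∈ Λ, a₁⁻¹ * a₁ = γ * b * γ⁻¹ :=
          ⟨ha₁, by simpa using one_mem Λ, ⟨1, one_mem Λ, by group⟩⟩
        have p₂ : a₂ ∈ A γ ∧ a₂⁻¹ * a₁ ∈ Λ ∧ ∃ b ∈ Λ, a₂⁻¹ * a₁ = γ * b * γ⁻¹ :=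
          ⟨ha₂, mul_mem (inv_mem (hAsub γ a₂ ha₂)) (hAsub γ a₁ ha₁),
            ⟨b₂⁻¹ * b₁, mul_mem (inv_mem hb₂) hb₁, key⟩⟩
        rw [ha₀u a₁ p₁, ha₀u a₂ p₂]
      have himg : (A γ).image ψ = A γ := by
        apply Finset.eq_of_subset_of_card_le
        · intro x hx
          obtain ⟨a, ha, rfl⟩ := Finset.mem_image.mp hx
          exact (hψspec a ha).1
        · rw [Finset.card_image_of_injOn hinj]
      calc ∑ a ∈ A γ, f (a * (l : Γ))
          = ∑ a ∈ A γ, f (ψ a) := Finset.sum_congr rfl hval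
        _ = ∑ x ∈ (A γ).image ψ, f x := (Finset.sum_image fun a ha b hb h =>
            hinj ha hb h).symm
        _ = ∑ a ∈ A γ, f a := by rw [himg]
  · -- affine
    intro a b τ σ hab
    funext g
    rw [avgMeas, avgMeas, avgMeas]
    rw [Finset.sum_add_distrib, ← Finset.mul_sum, ← Finset.mul_sum, mul_add]
    ring
end

section
/- Let G be a locally compact group acting measurably on a compact metrizable space M, μ a probability measure on G, and η a μ-stationary probability measure on M. If for every bounded Borel functions f₁,…,f₄ on M one has lim_n (μ^{*n} * η^{⊗4})(f₁ ⊗ f₂ ⊗ f₃ ⊗ f₄) = η(f₁f₂f₃f₄), then η is μ-proximal, i.e. the conditional measures η_ω = lim_n ω₁⋯ω_n η are almost surely point measures. -/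
/-! For a bounded continuous `f`, the variance of `f` under `g_* η`, integrated against
`μ^{*n}`, equals `(μ^{*n} * η)(f²) - (μ^{*n} * η^{⊗2})(f ⊗ f)`; by the correlation hypothesis
both terms tend to `η(f²)`. The partial products `ω₁⋯ω_n` have law `μ^{*n}`, so by Fatou's
lemma this variance along almost every trajectory has `liminf` zero; on the other hand it
converges to the variance of `f` under the weak* limit `η_ω`. Hence `η_ω` makes each function
of a countable separating family almost surely constant, i.e. it is a point mass. -/

open MeasureTheory Filter
open scoped ENNReal Topology

/-- The `n`-fold convolution power of a measure on a group (`μ^{*0} = δ_e`). -/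
noncomputable def convPow {G : Type*} [Monoid G] [MeasurableSpace G]
    (μ : Measure G) : ℕ → Measure G
  | 0 => Measure.dirac 1
  | n + 1 => (convPow μ n).mconv μ

/-- `η` is `μ`-stationary: `μ * η = η`. -/
def Stationary {G M : Type*} [SMul G M] [MeasurableSpace G] [MeasurableSpace M]
    (μ : Measure G) (η : Measure M) : Prop :=
  ∀ s : Set M, MeasurableSet s → (∫⁻ g, η ((g • ·) ⁻¹' s) ∂μ) = η s

open ProbabilityTheory

theorem listProd_ofFn_succ {G : Type*} [Monoid G] {n : ℕ} (g : Fin (n + 1) → G) :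
    (List.ofFn g).prod = (List.ofFn (Fin.init g)).prod * g (Fin.last n) := by
  rw [List.ofFn_succ', List.prod_concat]
  rfl

theorem listProd_map_range {G : Type*} [Monoid G] (ω : ℕ → G) (n : ℕ) :
    ((List.range n).map ω).prod = (List.ofFn fun i : Fin n => ω i).prod := by
  rw [List.ofFn_eq_map, ← List.map_coe_finRange_eq_range, List.map_map]
  rfl

theorem exists_abs_le_of_continuous {M : Type*} [TopologicalSpace M] [CompactSpace M]
    {f : M → ℝ} (hf : Continuous f) : ∃ C, ∀ x, |f x| ≤ C :=
  ⟨‖(⟨f, hf⟩ : C(M, ℝ))‖, fun x => ContinuousMap.norm_coe_le_norm ⟨f, hf⟩ x⟩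

theorem ProbabilityTheory.HasLaw.prodMap_id {Ω α β : Type*} [MeasurableSpace Ω]
    [MeasurableSpace α] [MeasurableSpace β] {X : Ω → α} {ν : Measure α} {P : Measure Ω}
    [SFinite P] (hX : HasLaw X ν P) (τ : Measure β) [SFinite τ] :
    HasLaw (Prod.map X id) (ν.prod τ) (P.prod τ) := by
  have hXm := hX.aemeasurable
  have hae : Prod.map X id =ᵐ[P.prod τ] Prod.map (hXm.mk X) id := by
    filter_upwards [Measure.quasiMeasurePreserving_fst.ae_eq_comp hXm.ae_eq_mk] with p hp
    simpa [Prod.map] using hp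
  refine HasLaw.congr ⟨(hXm.measurable_mk.prodMap measurable_id).aemeasurable, ?_⟩ hae
  rw [← Measure.map_prod_map _ _ hXm.measurable_mk measurable_id, Measure.map_id,
    ← Measure.map_congr hXm.ae_eq_mk, hX.map_eq]

section ConvolutionPowers

variable {G : Type*} [Monoid G] [MeasurableSpace G] {μ : Measure G}

theorem convPow_eq_zero_of_le {m n : ℕ} (h : convPow μ m = 0) (hmn : m ≤ n) :
    convPow μ n = 0 := by
  induction n, hmn using Nat.le_induction with
  | base => exact h
  | succ n _ ih => simp [convPow, Measure.mconv, ih]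

theorem convPow_ne_zero_of_tendsto_real_univ
    (h : Tendsto (fun n => (convPow μ n).real Set.univ) atTop (𝓝 1)) (n : ℕ) :
    convPow μ n ≠ 0 := by
  intro hn
  have h0 : Tendsto (fun n => (convPow μ n).real Set.univ) atTop (𝓝 0) :=
    tendsto_const_nhds.congr' <| (eventually_ge_atTop n).mono fun m hm => by
      simp [convPow_eq_zero_of_le hn hm]
  exact one_ne_zero (tendsto_nhds_unique h h0)

variable [IsProbabilityMeasure μ]

/- Multiplication on `G` need not be measurable for the product σ-algebra, in which case
`Measure.map` returns the junk value `0`; the hypothesis `hne` rules this out. -/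
theorem hasLaw_listProd_ofFn (hne : ∀ n, convPow μ n ≠ 0) (n : ℕ) :
    HasLaw (fun g : Fin n → G => (List.ofFn g).prod) (convPow μ n)
      (Measure.pi fun _ => μ) := by
  induction n with
  | zero => exact hasLaw_dirac_of_ae_eq (ae_of_all _ fun g => by simp)
  | succ n ih =>
    have hmul : HasLaw (fun p : G × G => p.1 * p.2) (convPow μ (n + 1))
        ((convPow μ n).prod μ) := by
      refine ⟨?_, rfl⟩
      by_contra h
      exact hne (n + 1) (Measure.map_of_not_aemeasurable h)
    have hsplit := (measurePreserving_piFinSuccAbove (fun _ : Fin (n + 1) => μ)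
      (Fin.last n)).hasLaw
    have hswap := (Measure.measurePreserving_swap (μ := μ)
      (ν := Measure.pi fun _ : Fin n => μ)).hasLaw
    convert hmul.comp ((ih.prodMap_id μ).comp (hswap.comp hsplit)) using 1
    funext g
    rw [listProd_ofFn_succ]
    simp [MeasurableEquiv.piFinSuccAbove_apply, Fin.insertNthEquiv]

theorem hasLaw_listProd_range {P : Measure (ℕ → G)}
    (hP : ∀ n : ℕ, P.map (fun ω (i : Fin n) => ω (i : ℕ)) = Measure.pi fun _ : Fin n => μ)
    (hne : ∀ n, convPow μ n ≠ 0) (n : ℕ) :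
    HasLaw (fun ω => ((List.range n).map ω).prod) (convPow μ n) P := by
  have hproj : HasLaw (fun ω (i : Fin n) => ω (i : ℕ)) (Measure.pi fun _ => μ) P :=
    ⟨(measurable_pi_lambda _ fun i => measurable_pi_apply _).aemeasurable, hP n⟩
  simpa only [Function.comp_def, listProd_map_range] using
    (hasLaw_listProd_ofFn hne n).comp hproj

end ConvolutionPowers

theorem ae_limit_eq_zero_of_tendsto_integral {Ω G : Type*} [MeasurableSpace Ω]
    [MeasurableSpace G] {P : Measure Ω} {X : ℕ → Ω → G} {ν : ℕ → Measure G}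
    (hX : ∀ n, HasLaw (X n) (ν n) P) {W : G → ℝ} (hW : ∀ g, 0 ≤ W g)
    (hint : ∀ᶠ n in atTop, Integrable W (ν n))
    (hlim : Tendsto (fun n => ∫ g, W g ∂ν n) atTop (𝓝 0)) :
    ∀ᵐ ω ∂P, ∀ L, Tendsto (fun n => W (X n ω)) atTop (𝓝 L) → L = 0 := by
  obtain ⟨N, hN⟩ := eventually_atTop.1 hint
  set Y : ℕ → Ω → ℝ≥0∞ := fun n ω => ENNReal.ofReal (W (X (n + N) ω))
  have hWm : ∀ n, AEMeasurable (fun g => ENNReal.ofReal (W g)) (P.map (X (n + N))) := by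
    intro n
    rw [(hX (n + N)).map_eq]
    exact (hN _ (Nat.le_add_left N n)).aemeasurable.ennreal_ofReal
  have hYm : ∀ n, AEMeasurable (Y n) P := fun n =>
    (hWm n).comp_aemeasurable (hX (n + N)).aemeasurable
  have hYint : ∀ n, ∫⁻ ω, Y n ω ∂P = ENNReal.ofReal (∫ g, W g ∂ν (n + N)) := by
    intro n
    rw [← lintegral_map' (hWm n) (hX (n + N)).aemeasurable, (hX (n + N)).map_eq,
      ofReal_integral_eq_lintegral_ofReal (hN _ (Nat.le_add_left N n)) (ae_of_all _ hW)]
  have hfatou : ∫⁻ ω, liminf (fun n => Y n ω) atTop ∂P = 0 := by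
    refine le_antisymm ((lintegral_liminf_le' hYm).trans_eq ?_) zero_le
    simp_rw [hYint]
    simpa [Function.comp_def] using
      ((ENNReal.tendsto_ofReal hlim).comp (tendsto_add_atTop_nat N)).liminf_eq
  have hliminf_m : AEMeasurable (fun ω => liminf (fun n => Y n ω) atTop) P := by
    simp_rw [liminf_eq_iSup_iInf_of_nat]
    exact AEMeasurable.iSup fun n => AEMeasurable.biInf _ (Set.to_countable _) fun i _ => hYm i
  filter_upwards [(lintegral_eq_zero_iff' hliminf_m).1 hfatou] with ω hω L hL
  have hY : Tendsto (fun n => Y n ω) atTop (𝓝 (ENNReal.ofReal L)) :=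
    ENNReal.tendsto_ofReal (hL.comp (tendsto_add_atTop_nat N))
  have hL0 : ENNReal.ofReal L = 0 := hY.liminf_eq.symm.trans hω
  exact le_antisymm (ENNReal.ofReal_eq_zero.1 hL0) (ge_of_tendsto' hL fun n => hW _)

section Variance

variable {M : Type*} [MeasurableSpace M]

/- No measurability in `g` is assumed: the two integrands are integrable against `ν n` only
because their integrals converge to a nonzero limit. -/
theorem tendsto_integral_variance {G : Type*} [MeasurableSpace G] {ν : ℕ → Measure G}
    {ρ : Measure M} [IsProbabilityMeasure ρ] {ψ : G → M → ℝ} (hψ : ∀ g, MemLp (ψ g) 2 ρ)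
    {c : ℝ} (hc : c ≠ 0) (hsq : Tendsto (fun n => ∫ g, ∫ x, ψ g x ^ 2 ∂ρ ∂ν n) atTop (𝓝 c))
    (hmean : Tendsto (fun n => ∫ g, (∫ x, ψ g x ∂ρ) ^ 2 ∂ν n) atTop (𝓝 c)) :
    (∀ᶠ n in atTop, Integrable (fun g => Var[ψ g; ρ]) (ν n)) ∧
      Tendsto (fun n => ∫ g, Var[ψ g; ρ] ∂ν n) atTop (𝓝 0) := by
  simp_rw [fun g => variance_eq_sub (hψ g), Pi.pow_apply]
  have hint : ∀ᶠ n in atTop, Integrable (fun g => ∫ x, ψ g x ^ 2 ∂ρ) (ν n) ∧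
      Integrable (fun g => (∫ x, ψ g x ∂ρ) ^ 2) (ν n) := by
    filter_upwards [hsq.eventually_ne hc, hmean.eventually_ne hc] with n h1 h2
    exact ⟨.of_integral_ne_zero h1, .of_integral_ne_zero h2⟩
  refine ⟨hint.mono fun n h => h.1.sub h.2, ?_⟩
  rw [← sub_self c]
  refine (hsq.sub hmean).congr' (hint.mono fun n h => ?_)
  exact (integral_sub h.1 h.2).symm

variable [TopologicalSpace M] [CompactSpace M] [OpensMeasurableSpace M]

theorem memLp_comp_of_continuous {φ : M → ℝ} (hφ : Continuous φ) {T : M → M}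
    (hT : Measurable T) (p : ℝ≥0∞) (ρ : Measure M) [IsFiniteMeasure ρ] :
    MemLp (fun x => φ (T x)) p ρ :=
  have ⟨C, hC⟩ := exists_abs_le_of_continuous hφ
  .of_bound (hφ.measurable.comp hT).aestronglyMeasurable C (ae_of_all _ fun x => hC (T x))

theorem tendsto_variance_comp_of_tendsto_integral {ρ κ : Measure M} [IsProbabilityMeasure ρ]
    [IsProbabilityMeasure κ] {T : ℕ → M → M} (hT : ∀ n, Measurable (T n))
    (hlim : ∀ f : C(M, ℝ), Tendsto (fun n => ∫ x, f (T n x) ∂ρ) atTop (𝓝 (∫ x, f x ∂κ)))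
    {φ : M → ℝ} (hφ : Continuous φ) :
    Tendsto (fun n => Var[fun x => φ (T n x); ρ]) atTop (𝓝 Var[φ; κ]) := by
  rw [variance_eq_sub (X := φ) (memLp_comp_of_continuous hφ measurable_id 2 κ)]
  simp_rw [variance_eq_sub (memLp_comp_of_continuous hφ (hT _) 2 ρ), Pi.pow_apply]
  exact (hlim ⟨fun x => φ x ^ 2, hφ.pow 2⟩).sub ((hlim ⟨φ, hφ⟩).pow 2)

theorem ae_limit_variance_smul_eq_zero {Ω G : Type*} [MeasurableSpace Ω] [MeasurableSpace G]
    [SMul G M] [MeasurableConstSMul G M] {P : Measure Ω} {X : ℕ → Ω → G} {ν : ℕ → Measure G}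
    (hX : ∀ n, HasLaw (X n) (ν n) P) {η : Measure M} [IsProbabilityMeasure η] {φ : M → ℝ}
    (hφ : Continuous φ) (hφ1 : ∀ x, 1 ≤ φ x)
    (hsq : Tendsto (fun n => ∫ g, ∫ x, φ (g • x) ^ 2 ∂η ∂ν n) atTop (𝓝 (∫ x, φ x ^ 2 ∂η)))
    (hmean : Tendsto (fun n => ∫ g, (∫ x, φ (g • x) ∂η) ^ 2 ∂ν n) atTop
      (𝓝 (∫ x, φ x ^ 2 ∂η))) :
    ∀ᵐ ω ∂P, ∀ L, Tendsto (fun n => Var[fun x => φ (X n ω • x); η]) atTop (𝓝 L) → L = 0 := by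
  have hc : ∫ x, φ x ^ 2 ∂η ≠ 0 := by
    refine (lt_of_lt_of_le one_pos ?_).ne'
    simpa using integral_mono (integrable_const (1 : ℝ))
      ((memLp_comp_of_continuous (hφ.pow 2) measurable_id 1 η).integrable le_rfl)
      fun x => one_le_pow₀ (hφ1 x)
  obtain ⟨hint, hlim⟩ := tendsto_integral_variance (ψ := fun g x => φ (g • x))
    (fun g => memLp_comp_of_continuous hφ (measurable_const_smul g) 2 η) hc hsq hmean
  exact ae_limit_eq_zero_of_tendsto_integral (W := fun g => Var[fun x => φ (g • x); η]) hX
    (fun g => variance_nonneg _ _) hint hlim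

end Variance

theorem exists_eq_dirac_of_ae_eq_const {M ι : Type*} [MeasurableSpace M] [Countable ι]
    {κ : Measure M} [IsProbabilityMeasure κ] {f : ι → M → ℝ}
    (hsep : ∀ x y, (∀ k, f k x = f k y) → x = y) (hconst : ∀ k, ∃ c, ∀ᵐ x ∂κ, f k x = c) :
    ∃ x, κ = Measure.dirac x := by
  choose c hc using hconst
  obtain ⟨x₀, hx₀⟩ := (ae_all_iff.2 hc).exists
  have hid : (id : M → M) =ᵐ[κ] fun _ => x₀ := by
    filter_upwards [ae_all_iff.2 hc] with x hx
    exact hsep x x₀ fun k => (hx k).trans (hx₀ k).symm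
  exact ⟨x₀, by simpa using (hasLaw_dirac_of_ae_eq hid).map_eq⟩

theorem eq_of_forall_dist_eq_of_denseRange {M : Type*} [MetricSpace M] {u : ℕ → M}
    (hu : DenseRange u) {x y : M} (h : ∀ k, dist (u k) x = dist (u k) y) : x = y := by
  refine dist_le_zero.1 (le_of_forall_pos_le_add fun ε hε => ?_)
  obtain ⟨k, hk⟩ := hu.exists_dist_lt x (half_pos hε)
  have := dist_triangle_left x y (u k)
  rw [dist_comm] at hk
  linarith [h k]

theorem exists_seq_continuous_one_le_separating (M : Type*) [TopologicalSpace M]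
    [TopologicalSpace.MetrizableSpace M] [TopologicalSpace.SeparableSpace M] [Nonempty M] :
    ∃ f : ℕ → M → ℝ, (∀ k, Continuous (f k)) ∧ (∀ k x, 1 ≤ f k x) ∧
      ∀ x y, (∀ k, f k x = f k y) → x = y := by
  let _ : MetricSpace M := TopologicalSpace.metrizableSpaceMetric M
  obtain ⟨u, hu⟩ := TopologicalSpace.exists_dense_seq M
  refine ⟨fun k x => 1 + dist (u k) x, fun k => by fun_prop,
    fun k x => le_add_of_nonneg_right dist_nonneg, fun x y h => ?_⟩
  exact eq_of_forall_dist_eq_of_denseRange hu fun k => add_left_cancel (h k)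

theorem stmt8_general {G M : Type*} [Group G] [MeasurableSpace G]
    [TopologicalSpace M] [CompactSpace M] [TopologicalSpace.MetrizableSpace M]
    [MeasurableSpace M] [BorelSpace M]
    [MulAction G M] [MeasurableSMul G M]
    (μ : Measure G) [IsProbabilityMeasure μ]
    (η : Measure M) [IsProbabilityMeasure η]
    -- the hypothesis on fourfold correlations:
    -- `lim_n (μ^{*n} * η^{⊗4})(f₁ ⊗ f₂ ⊗ f₃ ⊗ f₄) = η(f₁f₂f₃f₄)`
    (hcorr : ∀ f₁ f₂ f₃ f₄ : M → ℝ,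
      Measurable f₁ → Measurable f₂ → Measurable f₃ → Measurable f₄ →
      (∃ C, ∀ x, |f₁ x| ≤ C) → (∃ C, ∀ x, |f₂ x| ≤ C) →
      (∃ C, ∀ x, |f₃ x| ≤ C) → (∃ C, ∀ x, |f₄ x| ≤ C) →
      Tendsto (fun n =>
          ∫ g, (∫ x, f₁ (g • x) ∂η) * (∫ x, f₂ (g • x) ∂η) *
            (∫ x, f₃ (g • x) ∂η) * (∫ x, f₄ (g • x) ∂η) ∂(convPow μ n))
        atTop (𝓝 (∫ x, f₁ x * f₂ x * f₃ x * f₄ x ∂η)))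
    -- `P` is the product measure `μ^{⊗ℕ}` on the path space
    (P : Measure (ℕ → G))
    (hP : ∀ n : ℕ, P.map (fun ω (i : Fin n) => ω (i : ℕ)) =
      Measure.pi (fun _ : Fin n => μ)) :
    -- conclusion: almost surely, the conditional measures (weak* limits of
    -- `ω₁⋯ω_n η`) are point measures
    ∀ᵐ ω ∂P, ∀ κ : Measure M, IsProbabilityMeasure κ →
      (∀ f : C(M, ℝ),
        Tendsto (fun n => ∫ x, f (((List.range n).map ω).prod • x) ∂η)
          atTop (𝓝 (∫ x, f x ∂κ))) →
      ∃ x : M, κ = Measure.dirac x := by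
  have : Nonempty M := nonempty_of_isProbabilityMeasure η
  obtain ⟨f, hfc, hf1, hsep⟩ := exists_seq_continuous_one_le_separating M
  have hone : ∃ C, ∀ x : M, |(1 : ℝ)| ≤ C := ⟨1, fun _ => by simp⟩
  have hne : ∀ n, convPow μ n ≠ 0 := convPow_ne_zero_of_tendsto_real_univ <| by
    simpa using hcorr 1 1 1 1 measurable_const measurable_const measurable_const
      measurable_const hone hone hone hone
  have hvar (k : ℕ) : ∀ᵐ ω ∂P, ∀ L, Tendsto
      (fun n => Var[fun x => f k (((List.range n).map ω).prod • x); η]) atTop (𝓝 L) → L = 0 := by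
    have hbdd := exists_abs_le_of_continuous (hfc k)
    refine ae_limit_variance_smul_eq_zero (hasLaw_listProd_range hP hne) (hfc k) (hf1 k) ?_ ?_
    · simpa using hcorr (fun x => f k x ^ 2) 1 1 1 ((hfc k).pow 2).measurable measurable_const
        measurable_const measurable_const (exists_abs_le_of_continuous ((hfc k).pow 2))
        hone hone hone
    · simpa [sq] using hcorr (f k) (f k) 1 1 (hfc k).measurable (hfc k).measurable
        measurable_const measurable_const hbdd hbdd hone hone
  filter_upwards [ae_all_iff.2 hvar] with ω hω κ hκ hlim
  refine exists_eq_dirac_of_ae_eq_const hsep fun k => ⟨_, ae_eq_integral_of_variance_eq_zero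
    (memLp_comp_of_continuous (hfc k) measurable_id 2 κ) (hω k _ ?_)⟩
  exact tendsto_variance_comp_of_tendsto_integral (fun n => measurable_const_smul _) hlim (hfc k)

theorem stmt8 {G M : Type*} [Group G] [TopologicalSpace G] [IsTopologicalGroup G]
    [LocallyCompactSpace G] [MeasurableSpace G] [BorelSpace G]
    [TopologicalSpace M] [CompactSpace M] [TopologicalSpace.MetrizableSpace M]
    [MeasurableSpace M] [BorelSpace M]
    [MulAction G M] [MeasurableSMul G M]
    (μ : Measure G) [IsProbabilityMeasure μ]
    (η : Measure M) [IsProbabilityMeasure η] (hstat : Stationary μ η)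
    -- the hypothesis on fourfold correlations:
    -- `lim_n (μ^{*n} * η^{⊗4})(f₁ ⊗ f₂ ⊗ f₃ ⊗ f₄) = η(f₁f₂f₃f₄)`
    (hcorr : ∀ f₁ f₂ f₃ f₄ : M → ℝ,
      Measurable f₁ → Measurable f₂ → Measurable f₃ → Measurable f₄ →
      (∃ C, ∀ x, |f₁ x| ≤ C) → (∃ C, ∀ x, |f₂ x| ≤ C) →
      (∃ C, ∀ x, |f₃ x| ≤ C) → (∃ C, ∀ x, |f₄ x| ≤ C) →
      Tendsto (fun n =>
          ∫ g, (∫ x, f₁ (g • x) ∂η) * (∫ x, f₂ (g • x) ∂η) *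
            (∫ x, f₃ (g • x) ∂η) * (∫ x, f₄ (g • x) ∂η) ∂(convPow μ n))
        atTop (𝓝 (∫ x, f₁ x * f₂ x * f₃ x * f₄ x ∂η)))
    -- `P` is the product measure `μ^{⊗ℕ}` on the path space
    (P : Measure (ℕ → G)) [IsProbabilityMeasure P]
    (hP : ∀ n : ℕ, P.map (fun ω (i : Fin n) => ω (i : ℕ)) =
      Measure.pi (fun _ : Fin n => μ)) :
    -- conclusion: almost surely, the conditional measures (weak* limits of
    -- `ω₁⋯ω_n η`) are point measures
    ∀ᵐ ω ∂P, ∀ κ : Measure M, IsProbabilityMeasure κ →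
      (∀ f : C(M, ℝ),
        Tendsto (fun n => ∫ x, f (((List.range n).map ω).prod • x) ∂η)
          atTop (𝓝 (∫ x, f x ∂κ))) →
      ∃ x : M, κ = Measure.dirac x :=
  stmt8_general μ η hcorr P hP
end

section
/- For every positive summable sequence β = (β₁, β₂, …) of real numbers, the subsum set SubSum(β) = { ∑_{n∈S} β_n : S ⊆ ℕ } is a closed subset of [0, ∞). -/
/-- The subsum set of a sequence: all sums of subseries. -/
def SubSum (β : ℕ → ℝ) : Set ℝ :=
  {x | ∃ S : Set ℕ, HasSum (S.indicator β) x}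

theorem stmt11 (β : ℕ → ℝ) (hpos : ∀ n, 0 < β n) (hsum : Summable β) :
    IsClosed (SubSum β) ∧ SubSum β ⊆ Set.Ici (0 : ℝ) := by
  classical
  have hsummable : ∀ S : Set ℕ, Summable (S.indicator β) := by
    intro S
    refine Summable.of_nonneg_of_le (fun n => ?_) (fun n => ?_) hsum
    · exact Set.indicator_nonneg (fun n _ => (hpos n).le) n
    · by_cases h : n ∈ S
      · simp [Set.indicator_of_mem h]
      · simp [Set.indicator_of_notMem h, (hpos n).le]
  have hind : ∀ (f : ℕ → Bool) (n : ℕ),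
      ({n | f n = true} : Set ℕ).indicator β n = if f n then β n else 0 := by
    intro f n; simp [Set.indicator]
  set g : (ℕ → Bool) → ℝ := fun f => ∑' n, if f n then β n else 0 with hg
  have hcont : Continuous g := by
    apply continuous_tsum (u := β) (f := fun n (f : ℕ → Bool) => if f n then β n else 0)
    · intro n
      exact Continuous.comp (continuous_of_discreteTopology
        (f := fun b : Bool => if b then β n else 0)) (continuous_apply n)
    · exact hsum
    · intro n f
      by_cases h : f n <;> simp [h, (hpos n).le, abs_of_nonneg (hpos n).le]
  have hrange : SubSum β = Set.range g := by
    ext x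
    constructor
    · rintro ⟨S, hS⟩
      refine ⟨fun n => decide (n ∈ S), ?_⟩
      have h1 : g (fun n => decide (n ∈ S)) = ∑' n, S.indicator β n := by
        exact tsum_congr fun n => by simp [Set.indicator]
      rw [h1, hS.tsum_eq]
    · rintro ⟨f, rfl⟩
      refine ⟨{n | f n = true}, ?_⟩
      have : g f = ∑' n, ({n | f n = true} : Set ℕ).indicator β n :=
        tsum_congr fun n => (hind f n).symm
      rw [this]
      exact (hsummable _).hasSum
  constructor
  · rw [hrange]
    exact (isCompact_range hcont).isClosed
  · rintro x ⟨S, hS⟩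
    exact hS.nonneg (Set.indicator_nonneg (fun n _ => (hpos n).le))
end

section
/- Let β = (β_n) be a positive, non-increasing summable sequence and set B_n = ∑_{k > n} β_k. If β_n ≤ B_n for all n ≥ 1, then the subsum set SubSum(β) = { ∑_{n∈S} β_n : S ⊆ ℕ } equals the full interval [0, B₀], where B₀ = ∑_{k≥1} β_k. -/
open Filter Topology Finset

noncomputable def greedyRemainder (β : ℕ → ℝ) (x : ℝ) : ℕ → ℝ
  | 0 => x
  | n + 1 => if β n ≤ greedyRemainder β x n then greedyRemainder β x n - β n
      else greedyRemainder β x n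

def greedySet (β : ℕ → ℝ) (x : ℝ) : Set ℕ := {n | β n ≤ greedyRemainder β x n}

section

variable {β : ℕ → ℝ} {x : ℝ}

lemma greedyRemainder_succ (n : ℕ) :
    greedyRemainder β x (n + 1) = greedyRemainder β x n - (greedySet β x).indicator β n := by
  by_cases h : β n ≤ greedyRemainder β x n <;> simp [greedyRemainder, greedySet, h]

lemma sum_indicator_greedySet (n : ℕ) :
    ∑ i ∈ range n, (greedySet β x).indicator β i = x - greedyRemainder β x n := by
  induction n with
  | zero => simp [greedyRemainder]
  | succ n ih => rw [sum_range_succ, ih, greedyRemainder_succ]; ring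

lemma greedyRemainder_nonneg (hx : 0 ≤ x) (n : ℕ) : 0 ≤ greedyRemainder β x n := by
  induction n with
  | zero => exact hx
  | succ n ih =>
    rw [greedyRemainder_succ]
    by_cases h : n ∈ greedySet β x
    · rw [Set.indicator_of_mem h]; exact sub_nonneg.2 h
    · rwa [Set.indicator_of_notMem h, sub_zero]

lemma tsum_nat_add_eq_add_tsum_nat_add (hsum : Summable β) (n : ℕ) :
    ∑' k, β (k + n) = β n + ∑' k, β (k + (n + 1)) := by
  rw [((summable_nat_add_iff n).2 hsum).tsum_eq_zero_add]
  simp only [zero_add, add_right_comm _ 1 n, add_assoc]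

lemma greedyRemainder_le_tsum_nat_add (hsum : Summable β)
    (hdom : ∀ n, β n ≤ ∑' k, β (k + (n + 1))) (hx : x ≤ ∑' n, β n) (n : ℕ) :
    greedyRemainder β x n ≤ ∑' k, β (k + n) := by
  induction n with
  | zero => simpa [greedyRemainder] using hx
  | succ n ih =>
    rw [tsum_nat_add_eq_add_tsum_nat_add hsum] at ih
    by_cases h : β n ≤ greedyRemainder β x n
    · simp only [greedyRemainder, if_pos h]; linarith
    · simp only [greedyRemainder, if_neg h]; linarith [hdom n]

lemma tendsto_greedyRemainder (hsum : Summable β) (hdom : ∀ n, β n ≤ ∑' k, β (k + (n + 1)))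
    (hx : x ∈ Set.Icc 0 (∑' n, β n)) : Tendsto (greedyRemainder β x) atTop (𝓝 0) :=
  squeeze_zero (greedyRemainder_nonneg hx.1) (greedyRemainder_le_tsum_nat_add hsum hdom hx.2)
    (tendsto_sum_nat_add β)

lemma hasSum_indicator_greedySet (hβ : ∀ n, 0 ≤ β n) (hsum : Summable β)
    (hdom : ∀ n, β n ≤ ∑' k, β (k + (n + 1))) (hx : x ∈ Set.Icc 0 (∑' n, β n)) :
    HasSum ((greedySet β x).indicator β) x := by
  rw [hasSum_iff_tendsto_nat_of_nonneg (Set.indicator_nonneg fun i _ => hβ i)]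
  simpa [sum_indicator_greedySet] using (tendsto_greedyRemainder hsum hdom hx).const_sub x

lemma subSum_subset_Icc (hβ : ∀ n, 0 ≤ β n) (hsum : Summable β) :
    SubSum β ⊆ Set.Icc 0 (∑' n, β n) := by
  rintro x ⟨S, hS⟩
  exact ⟨hasSum_le (Set.indicator_nonneg fun i _ => hβ i) hasSum_zero hS,
    hasSum_le (Set.indicator_le_self' fun i _ => hβ i) hS hsum.hasSum⟩

lemma Icc_subset_subSum (hβ : ∀ n, 0 ≤ β n) (hsum : Summable β)
    (hdom : ∀ n, β n ≤ ∑' k, β (k + (n + 1))) : Set.Icc 0 (∑' n, β n) ⊆ SubSum β :=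
  fun x hx => ⟨greedySet β x, hasSum_indicator_greedySet hβ hsum hdom hx⟩

end

theorem stmt12_general (β : ℕ → ℝ) (hpos : ∀ n, 0 < β n) (hsum : Summable β)
    -- `β_n ≤ B_n = ∑_{k > n} β_k` for every `n`
    (hdom : ∀ n, β n ≤ ∑' k, β (n + 1 + k)) :
    SubSum β = Set.Icc 0 (∑' n, β n) := by
  have hβ : ∀ n, 0 ≤ β n := fun n => (hpos n).le
  have hdom' : ∀ n, β n ≤ ∑' k, β (k + (n + 1)) := fun n => by simpa only [add_comm] using hdom n
  exact (subSum_subset_Icc hβ hsum).antisymm (Icc_subset_subSum hβ hsum hdom')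

theorem stmt12 (β : ℕ → ℝ) (hpos : ∀ n, 0 < β n) (hsum : Summable β)
    (hmono : Antitone β)
    -- `β_n ≤ B_n = ∑_{k > n} β_k` for every `n`
    (hdom : ∀ n, β n ≤ ∑' k, β (n + 1 + k)) :
    SubSum β = Set.Icc 0 (∑' n, β n) :=
  stmt12_general β hpos hsum hdom
end
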